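/- For all n, 2·C_n² + 8 = (4·B_n)², where C_0 = 2, C_1 = 14, C_n = 6C_{n-1} - C_{n-2} and B_0 = 1, B_1 = 5, B_n = 6B_{n-1} - B_{n-2}. In particular, 2·C_n² + 8 is a perfect square. -/
import Mathlib


def B : ℕ → ℤ
  | 0 => 1
  | 1 => 5
  | (n+2) => 6 * B (n+1) - B n

def C : ℕ → ℤ
  | 0 => 2
  | 1 => 14
  | (n+2) => 6 * C (n+1) - C n

lemma key (n : ℕ) : (C n)^2 - 8 * (B n)^2 = -4 ∧ (C (n+1))^2 - 8 * (B (n+1))^2 = -4 ∧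
    C n * C (n+1) - 8 * B n * B (n+1) = -12 := by
  induction n with
  | zero => refine ⟨?_, ?_, ?_⟩ <;> simp [B, C] <;> ring
  | succ k ih =>
    obtain ⟨h1, h2, h3⟩ := ih
    refine ⟨h2, ?_, ?_⟩
    · show (6 * C (k+1) - C k)^2 - 8 * (6 * B (k+1) - B k)^2 = -4
      nlinarith [h1, h2, h3]
    · show C (k+1) * (6 * C (k+1) - C k) - 8 * B (k+1) * (6 * B (k+1) - B k) = -12
      nlinarith [h1, h2, h3]

theorem stmt11 (n : ℕ) : 2 * (C n)^2 + 8 = (4 * B n)^2 ∧ IsSquare (2 * (C n)^2 + 8) := by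
  have h := (key n).1
  constructor
  · nlinarith
  · exact ⟨4 * B n, by nlinarith⟩
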